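/- (Theorem 1) Let M be a von Neumann algebra acting on a complex Hilbert space H, and let a, b ∈ M with 0 ≤ a ≤ 1 and 0 ≤ b ≤ 1 be strict elements satisfying a·b = b·a, a² + b² ≤ 1, and such that a² + b² is strict. Put a₁ = [[a², ab],[ab, 1 − a²]] and b₁ = [[b², −ab],[−ab, 1 − b²]] in M₂(M), the C*-algebra of 2×2 matrices with entries in M. Then 0 ≤ a₁ ≤ I₂, 0 ≤ b₁ ≤ I₂, and a₁ is absolutely compatible with b₁. -/

import Mathlib

/-!
With `s = √(1 - a² - b²)`, which exists because `a² + b² ≤ 1`, each of the four order relations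
is a Gram factorisation `Z* Z` of a `2 × 2` matrix, e.g. `a₁ = Z* Z` for `Z = [[a, b], [0, s]]`;
and `b₁` is `a₁` built from the pair `(b, -a)` instead of `(a, b)`. For absolute compatibility,
`a₁ - b₁ = [[d, e], [e, -d]]` with `d = a² - b²`, `e = 2ab`, whose square is
`(d² + e²) I₂ = (a² + b²)² I₂`, while `1 - a₁ - b₁ = [[s², 0], [0, -s²]]` squares to
`s⁴ I₂`. Hence `|a₁ - b₁| + |1 - a₁ - b₁| = (a² + b²) I₂ + s² I₂ = I₂`.
-/

/-- A projection: `p = p* = p²`. -/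
def IsProj {L : Type*} [Mul L] [Star L] (p : L) : Prop := star p = p ∧ p * p = p

variable {H : Type} [NormedAddCommGroup H] [InnerProductSpace ℂ H] [CompleteSpace H]

/-- An element `a` of a von Neumann algebra `M` (with `0 ≤ a ≤ 1`) is strict in `M` if the only
projection of `M` below `a` is `0` and the only projection of `M` annihilating `a` is `0`. -/
def StrictIn (M : VonNeumannAlgebra H) (a : H →L[ℂ] H) : Prop :=
  (∀ p ∈ M, IsProj p → p ≤ a → p = 0) ∧ (∀ p ∈ M, IsProj p → p * a = 0 → p = 0)

/-- The Loewner order on `M₂(B(H)) ≅ B(H ⊕ H)`: `X ≤ Y` iff `Y - X` is positive, i.e.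
`Y - X = Z* Z` for some `Z`. -/
def MatLE (X Y : Matrix (Fin 2) (Fin 2) (H →L[ℂ] H)) : Prop :=
  ∃ Z : Matrix (Fin 2) (Fin 2) (H →L[ℂ] H), Y - X = star Z * Z

/-- Absolute compatibility `|X - Y| + |1 - X - Y| = 1` in the C*-algebra `M₂(B(H))`, expressed
via the (unique) positive square roots `u` of `(X - Y)* (X - Y)` and `v` of
`(1 - X - Y)* (1 - X - Y)`. -/
def MatAbsCompatible (X Y : Matrix (Fin 2) (Fin 2) (H →L[ℂ] H)) : Prop :=
  ∃ u v : Matrix (Fin 2) (Fin 2) (H →L[ℂ] H), MatLE 0 u ∧ MatLE 0 v ∧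
    u * u = star (X - Y) * (X - Y) ∧ v * v = star (1 - X - Y) * (1 - X - Y) ∧ u + v = 1

namespace Matrix

variable {R : Type*}

theorem fin_two_eq_fin_two_iff {x y z w x' y' z' w' : R} :
    !![x, y; z, w] = !![x', y'; z', w'] ↔ x = x' ∧ y = y' ∧ z = z' ∧ w = w' := by
  simp [and_assoc]

theorem sub_fin_two [Sub R] (x y z w x' y' z' w' : R) :
    !![x, y; z, w] - !![x', y'; z', w'] = !![x - x', y - y'; z - z', w - w'] := by
  ext i j; fin_cases i <;> fin_cases j <;> rfl

theorem star_fin_two [Star R] (x y z w : R) :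
    star !![x, y; z, w] = !![star x, star z; star y, star w] := by
  ext i j; fin_cases i <;> fin_cases j <;> rfl

theorem scalar_fin_two [Semiring R] (r : R) : scalar (Fin 2) r = !![r, 0; 0, r] := by
  ext i j; fin_cases i <;> fin_cases j <;> rfl

theorem star_scalar {n : Type*} [Fintype n] [DecidableEq n] [Semiring R] [StarRing R] (r : R) :
    star (scalar n r) = scalar n (star r) := by
  simp [scalar_apply, star_eq_conjTranspose]

theorem star_mul_self_fin_two [Semiring R] [StarRing R] (x y z w : R) :
    star !![x, y; z, w] * !![x, y; z, w] =
      !![star x * x + star z * z, star x * y + star z * w;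
         star y * x + star w * z, star y * y + star w * w] := by
  rw [star_fin_two, mul_fin_two]

theorem star_mul_self_fin_two_of_commute [Ring R] [StarRing R] {d e : R} (hd : IsSelfAdjoint d)
    (he : IsSelfAdjoint e) (hde : Commute d e) :
    star !![d, e; e, -d] * !![d, e; e, -d] = scalar (Fin 2) (d * d + e * e) := by
  rw [star_mul_self_fin_two, scalar_fin_two, fin_two_eq_fin_two_iff]
  simp only [star_neg, hd.star_eq, he.star_eq, mul_neg, neg_mul, neg_neg, hde.eq]
  exact ⟨trivial, add_neg_cancel _, add_neg_cancel _, add_comm _ _⟩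

end Matrix

open Matrix

theorem Commute.pythagorean_identity {R : Type*} [Ring R] {a b : R} (h : Commute a b) :
    (a * a - b * b) * (a * a - b * b) + (a * b + a * b) * (a * b + a * b) =
      (a * a + b * b) * (a * a + b * b) := by
  have habab : a * b * (a * b) = a * a * (b * b) := (h.mul_mul_mul_comm a b).symm
  have hbbaa : b * b * (a * a) = a * a * (b * b) :=
    ((h.mul_right h).mul_left (h.mul_right h)).symm.eq
  calc _ = a * a * (a * a) - a * a * (b * b) - b * b * (a * a) + b * b * (b * b)
        + 4 * (a * b * (a * b)) := by noncomm_ring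
    _ = a * a * (a * a) + a * a * (b * b) + b * b * (a * a) + b * b * (b * b) := by
        rw [habab, hbbaa]; noncomm_ring
    _ = _ := by noncomm_ring

section PairLift

variable {R : Type*} [Ring R] [StarRing R] {a b s : R}

def pairLift (a b : R) : Matrix (Fin 2) (Fin 2) R := !![a * a, a * b; a * b, 1 - a * a]

omit [StarRing R] in
theorem pairLift_neg (hab : Commute a b) :
    pairLift b (-a) = !![b * b, -(a * b); -(a * b), 1 - b * b] := by
  rw [pairLift, mul_neg, hab.eq]

theorem star_mul_self_one_sub_pairLift_sub_pairLift_neg (hab : Commute a b) (hs : IsSelfAdjoint s)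
    (hs2 : s * s = 1 - (a * a + b * b)) :
    star (1 - pairLift a b - pairLift b (-a)) * (1 - pairLift a b - pairLift b (-a)) =
      scalar (Fin 2) (s * s * (s * s)) := by
  have hsub : 1 - pairLift a b - pairLift b (-a) = !![s * s, 0; 0, -(s * s)] := by
    rw [pairLift_neg hab, pairLift, one_fin_two, sub_fin_two, sub_fin_two, fin_two_eq_fin_two_iff,
      hs2]
    exact ⟨by noncomm_ring, by noncomm_ring, by noncomm_ring, by noncomm_ring⟩
  rw [hsub, star_mul_self_fin_two_of_commute ((hs.commute_iff hs).1 (.refl s)) (.zero R)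
    (.zero_right _), mul_zero, add_zero]

variable (ha : IsSelfAdjoint a) (hb : IsSelfAdjoint b) (hab : Commute a b)
include ha hb hab

theorem pairLift_eq_star_mul_self (hs : IsSelfAdjoint s) (hs2 : s * s = 1 - (a * a + b * b)) :
    pairLift a b = star !![a, b; 0, s] * !![a, b; 0, s] := by
  rw [pairLift, star_mul_self_fin_two, fin_two_eq_fin_two_iff]
  simp only [ha.star_eq, hb.star_eq, hs.star_eq, star_zero, hs2, hab.eq]
  exact ⟨by simp, by simp, by simp, by noncomm_ring⟩

theorem one_sub_pairLift_eq_star_mul_self (hs : IsSelfAdjoint s)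
    (hs2 : s * s = 1 - (a * a + b * b)) :
    1 - pairLift a b = star !![s, 0; -b, a] * !![s, 0; -b, a] := by
  rw [pairLift, one_fin_two, sub_fin_two, star_mul_self_fin_two, fin_two_eq_fin_two_iff]
  simp only [ha.star_eq, hb.star_eq, hs.star_eq, star_zero, star_neg, mul_neg, neg_mul, neg_neg,
    hs2, hab.eq]
  exact ⟨by noncomm_ring, by simp, by simp, by noncomm_ring⟩

theorem scalar_mul_self_add_mul_self_eq_star_mul_self :
    scalar (Fin 2) (a * a + b * b) = star !![a, b; -b, a] * !![a, b; -b, a] := by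
  rw [scalar_fin_two, star_mul_self_fin_two, fin_two_eq_fin_two_iff]
  simp only [ha.star_eq, hb.star_eq, star_neg, mul_neg, neg_mul, neg_neg, hab.eq]
  exact ⟨trivial, (add_neg_cancel _).symm, (add_neg_cancel _).symm, add_comm _ _⟩

theorem star_mul_self_pairLift_sub_pairLift_neg :
    star (pairLift a b - pairLift b (-a)) * (pairLift a b - pairLift b (-a)) =
      scalar (Fin 2) ((a * a + b * b) * (a * a + b * b)) := by
  have hsa_ab : IsSelfAdjoint (a * b) := (ha.commute_iff hb).1 hab
  have hsa_d : IsSelfAdjoint (a * a - b * b) :=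
    ((ha.commute_iff ha).1 (.refl a)).sub ((hb.commute_iff hb).1 (.refl b))
  have hcomm_d : Commute (a * a - b * b) (a * b + a * b) := by
    have hda : Commute (a * a - b * b) a :=
      ((Commute.refl a).mul_left (.refl a)).sub_left (hab.symm.mul_left hab.symm)
    have hdb : Commute (a * a - b * b) b :=
      (hab.mul_left hab).sub_left ((Commute.refl b).mul_left (.refl b))
    exact (hda.mul_right hdb).add_right (hda.mul_right hdb)
  have hsub : pairLift a b - pairLift b (-a) =
      !![a * a - b * b, a * b + a * b; a * b + a * b, -(a * a - b * b)] := by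
    rw [pairLift_neg hab, pairLift, sub_fin_two, fin_two_eq_fin_two_iff]
    exact ⟨rfl, sub_neg_eq_add _ _, sub_neg_eq_add _ _, by noncomm_ring⟩
  rw [hsub, star_mul_self_fin_two_of_commute hsa_d (hsa_ab.add hsa_ab) hcomm_d,
    hab.pythagorean_identity]

end PairLift

theorem scalar_mul_self_eq_star_mul_self {n R : Type*} [Fintype n] [DecidableEq n] [Semiring R]
    [StarRing R] {s : R} (hs : IsSelfAdjoint s) :
    scalar n (s * s) = star (scalar n s) * scalar n s := by
  rw [star_scalar, hs.star_eq, map_mul]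

theorem matLE_zero_iff {X : Matrix (Fin 2) (Fin 2) (H →L[ℂ] H)} :
    MatLE 0 X ↔ ∃ Z, X = star Z * Z := by
  simp only [MatLE, sub_zero]

theorem statement3_general {a b : H →L[ℂ] H}
    (ha0 : 0 ≤ a) (hb0 : 0 ≤ b) (hcomm : a * b = b * a)
    (hsum : a * a + b * b ≤ 1) :
    MatLE 0 !![a * a, a * b; a * b, 1 - a * a] ∧
      MatLE !![a * a, a * b; a * b, 1 - a * a] 1 ∧
      MatLE 0 !![b * b, -(a * b); -(a * b), 1 - b * b] ∧
      MatLE !![b * b, -(a * b); -(a * b), 1 - b * b] 1 ∧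
      MatAbsCompatible !![a * a, a * b; a * b, 1 - a * a]
        !![b * b, -(a * b); -(a * b), 1 - b * b] := by
  obtain ⟨s, hs, hs2⟩ : ∃ s : H →L[ℂ] H, IsSelfAdjoint s ∧ s * s = 1 - (a * a + b * b) :=
    ⟨CFC.sqrt _, (CFC.sqrt_nonneg _).isSelfAdjoint, CFC.sqrt_mul_sqrt_self _ (sub_nonneg.2 hsum)⟩
  have ha : IsSelfAdjoint a := .of_nonneg ha0
  have hb : IsSelfAdjoint b := .of_nonneg hb0
  have hab : Commute a b := hcomm
  have hs2' : s * s = 1 - (b * b + -a * -a) := by rw [neg_mul_neg, add_comm, hs2]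
  rw [← pairLift_neg hab]
  refine ⟨matLE_zero_iff.2 ⟨_, pairLift_eq_star_mul_self ha hb hab hs hs2⟩,
    ⟨_, one_sub_pairLift_eq_star_mul_self ha hb hab hs hs2⟩,
    matLE_zero_iff.2 ⟨_, pairLift_eq_star_mul_self hb ha.neg hab.symm.neg_right hs hs2'⟩,
    ⟨_, one_sub_pairLift_eq_star_mul_self hb ha.neg hab.symm.neg_right hs hs2'⟩,
    scalar (Fin 2) (a * a + b * b), scalar (Fin 2) (s * s),
    matLE_zero_iff.2 ⟨_, scalar_mul_self_add_mul_self_eq_star_mul_self ha hb hab⟩,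
    matLE_zero_iff.2 ⟨_, scalar_mul_self_eq_star_mul_self hs⟩,
    ?_, ?_, ?_⟩
  · rw [← map_mul]
    exact (star_mul_self_pairLift_sub_pairLift_neg ha hb hab).symm
  · rw [← map_mul]
    exact (star_mul_self_one_sub_pairLift_sub_pairLift_neg hab hs hs2).symm
  · rw [← map_add, hs2, add_sub_cancel, map_one]

/-- Theorem 1: if `a, b` are strict, commuting, `0 ≤ a, b ≤ 1`, `a² + b² ≤ 1`
with `a² + b²` strict in a von Neumann algebra `M`, then
`a₁ = [[a², ab],[ab, 1 - a²]]` and `b₁ = [[b², -ab],[-ab, 1 - b²]]` satisfy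
`0 ≤ a₁, b₁ ≤ I₂` and are absolutely compatible in `M₂(M)`. -/
theorem statement3 (M : VonNeumannAlgebra H) {a b : H →L[ℂ] H}
    (haM : a ∈ M) (hbM : b ∈ M)
    (ha0 : 0 ≤ a) (ha1 : a ≤ 1) (hb0 : 0 ≤ b) (hb1 : b ≤ 1)
    (hsa : StrictIn M a) (hsb : StrictIn M b) (hcomm : a * b = b * a)
    (hsum : a * a + b * b ≤ 1) (hsumstrict : StrictIn M (a * a + b * b)) :
    MatLE 0 !![a * a, a * b; a * b, 1 - a * a] ∧
      MatLE !![a * a, a * b; a * b, 1 - a * a] 1 ∧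
      MatLE 0 !![b * b, -(a * b); -(a * b), 1 - b * b] ∧
      MatLE !![b * b, -(a * b); -(a * b), 1 - b * b] 1 ∧
      MatAbsCompatible !![a * a, a * b; a * b, 1 - a * a]
        !![b * b, -(a * b); -(a * b), 1 - b * b] :=
  statement3_general ha0 hb0 hcomm hsum
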